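/- Let ρ₁, ρ₂, ρ₃ be non-vanishing positive functions on ℝ₊ such that P(ρ₁,ρ₂,ρ₃) is well-defined, and let p > 1. Then for F_j ∈ L^p(ℝ₊, ρ_j), j = 1,2,3, ‖P(F₁ρ₁, F₂ρ₂, F₃ρ₃) · P(ρ₁,ρ₂,ρ₃)^{1/p - 1}‖_{L^p(ℝ₊)} ≤ ∏_{j=1}^3 ‖F_j‖_{L^p(ℝ₊, ρ_j)}. -/

import Mathlib

open MeasureTheory Real Set

noncomputable def Phi (x u v w : ℝ) : ℝ :=
  (v + w) / ((v + w) ^ 2 + (x + u) ^ 2) + (v + w) / ((v + w) ^ 2 + (x - u) ^ 2)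

noncomputable def P (f g h : ℝ → ℝ) (x : ℝ) : ℝ :=
  (1 / π) * ∫ u in Ioi (0 : ℝ), ∫ v in Ioi (0 : ℝ), ∫ w in Ioi (0 : ℝ),
    Phi x u v w * f u * g v * h w

noncomputable def Fc (f : ℝ → ℝ) (y : ℝ) : ℝ :=
  Real.sqrt (2 / π) * ∫ x in Ioi (0 : ℝ), Real.cos (x * y) * f x

noncomputable def Lap (f : ℝ → ℝ) (y : ℝ) : ℝ :=
  ∫ x in Ioi (0 : ℝ), Real.exp (-(x * y)) * f x

/-!
For fixed `x`, Hölder's inequality for the measure `Φ(x, t) dt` on `(0, ∞)³`, applied to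
`|F(t)| ρ(t) = (|F(t)|^p ρ(t))^(1/p) ρ(t)^(1 - 1/p)` with `F = F₁ F₂ F₃` and `ρ = ρ₁ ρ₂ ρ₃`, gives
`|P(F₁ρ₁, F₂ρ₂, F₃ρ₃)(x)|^p ≤ P(|F₁|^p ρ₁, |F₂|^p ρ₂, |F₃|^p ρ₃)(x) · P(ρ₁, ρ₂, ρ₃)(x)^(p - 1)`.
Integrating in `x`, Tonelli's theorem and `∫₀^∞ Φ(x, u, v, w) dx = π` (a primitive is
`arctan ((x + u) / (v + w)) + arctan ((x - u) / (v + w))`) turn the right-hand side into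
`∏ⱼ ∫₀^∞ |Fⱼ|^p ρⱼ`.
-/

open scoped ENNReal

lemma lintegral_enorm_eq_ofReal_integral {α : Type*} [MeasurableSpace α] {μ : Measure α}
    {f : α → ℝ} (hf : Integrable f μ) (hnonneg : 0 ≤ᵐ[μ] f) :
    ∫⁻ x, ‖f x‖ₑ ∂μ = ENNReal.ofReal (∫ x, f x ∂μ) := by
  rw [lintegral_enorm_of_ae_nonneg hnonneg, ofReal_integral_eq_lintegral_ofReal hf hnonneg]

lemma Phi_nonneg {v w : ℝ} (hvw : 0 < v + w) (x u : ℝ) : 0 ≤ Phi x u v w := by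
  unfold Phi
  positivity

lemma measurable_Phi : Measurable fun z : ℝ × ℝ × ℝ × ℝ => Phi z.1 z.2.1 z.2.2.1 z.2.2.2 := by
  unfold Phi
  fun_prop

lemma hasDerivAt_arctan_add_div {a : ℝ} (ha : a ≠ 0) (u x : ℝ) :
    HasDerivAt (fun x => arctan ((x + u) / a)) (a / (a ^ 2 + (x + u) ^ 2)) x := by
  have hlin : HasDerivAt (fun x => (x + u) / a) (1 / a) x := by
    simpa using ((hasDerivAt_id x).add_const u).div_const a
  refine hlin.arctan.congr_deriv ?_
  field_simp

lemma tendsto_arctan_add_div_atTop {a : ℝ} (ha : 0 < a) (u : ℝ) :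
    Filter.Tendsto (fun x => arctan ((x + u) / a)) Filter.atTop (nhds (π / 2)) :=
  (tendsto_arctan_atTop.mono_right nhdsWithin_le_nhds).comp
    ((Filter.tendsto_atTop_add_const_right _ u Filter.tendsto_id).atTop_div_const ha)

lemma integrableOn_Phi_and_integral_eq {u v w : ℝ} (hvw : 0 < v + w) :
    IntegrableOn (fun x => Phi x u v w) (Ioi 0) ∧ ∫ x in Ioi 0, Phi x u v w = π := by
  set g : ℝ → ℝ := fun x => arctan ((x + u) / (v + w)) + arctan ((x - u) / (v + w))
  have hderiv : ∀ x ∈ Ioi (0 : ℝ), HasDerivAt g (Phi x u v w) x := fun x _ => by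
    have h := (hasDerivAt_arctan_add_div hvw.ne' u x).add
      (hasDerivAt_arctan_add_div hvw.ne' (-u) x)
    simp only [← sub_eq_add_neg] at h
    exact h
  have hcont : ContinuousWithinAt g (Ici 0) 0 := by fun_prop
  have hnonneg : ∀ x ∈ Ioi (0 : ℝ), 0 ≤ Phi x u v w := fun x _ => Phi_nonneg hvw x u
  have hlim : Filter.Tendsto g Filter.atTop (nhds π) := by
    have h := (tendsto_arctan_add_div_atTop hvw u).add (tendsto_arctan_add_div_atTop hvw (-u))
    simp only [← sub_eq_add_neg, add_halves] at h
    exact h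
  have hg0 : g 0 = 0 := by simp [g, neg_div, arctan_neg]
  refine ⟨integrableOn_Ioi_deriv_of_nonneg hcont hderiv hnonneg hlim, ?_⟩
  rw [integral_Ioi_of_hasDerivAt_of_nonneg hcont hderiv hnonneg hlim, hg0, sub_zero]

lemma lintegral_Ioi_enorm_Phi {u v w : ℝ} (hvw : 0 < v + w) :
    ∫⁻ x in Ioi 0, ‖Phi x u v w‖ₑ = ENNReal.ofReal π := by
  obtain ⟨hint, hval⟩ := integrableOn_Phi_and_integral_eq (u := u) hvw
  rw [lintegral_enorm_eq_ofReal_integral hint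
    (ae_of_all _ fun x => Phi_nonneg hvw x u), hval]

section TripleProduct

variable {α β γ E : Type*} [MeasurableSpace α] [MeasurableSpace β] [MeasurableSpace γ]
  {μ₁ : Measure α} {μ₂ : Measure β} {μ₃ : Measure γ}

lemma lintegral_prod₃ [SFinite μ₂] [SFinite μ₃] {f : α × β × γ → ℝ≥0∞}
    (hf : AEMeasurable f (μ₁.prod (μ₂.prod μ₃))) :
    ∫⁻ t, f t ∂(μ₁.prod (μ₂.prod μ₃)) = ∫⁻ u, ∫⁻ v, ∫⁻ w, f (u, v, w) ∂μ₃ ∂μ₂ ∂μ₁ := by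
  rw [lintegral_prod _ hf]
  refine lintegral_congr_ae ?_
  filter_upwards [hf.aestronglyMeasurable.prodMk_left] with u hu
  exact lintegral_prod _ hu.aemeasurable

lemma integral_prod₃ [SFinite μ₁] [SFinite μ₂] [SFinite μ₃] [NormedAddCommGroup E]
    [NormedSpace ℝ E] {f : α × β × γ → E}
    (hf : Integrable f (μ₁.prod (μ₂.prod μ₃))) :
    ∫ t, f t ∂(μ₁.prod (μ₂.prod μ₃)) = ∫ u, ∫ v, ∫ w, f (u, v, w) ∂μ₃ ∂μ₂ ∂μ₁ := by
  rw [integral_prod _ hf]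
  refine integral_congr_ae ?_
  filter_upwards [hf.prod_right_ae] with u hu
  exact integral_prod _ hu

lemma enorm_integral₃_le [SFinite μ₂] [SFinite μ₃] [NormedAddCommGroup E] [NormedSpace ℝ E]
    {f : α × β × γ → E}
    (hf : AEMeasurable (fun t => ‖f t‖ₑ) (μ₁.prod (μ₂.prod μ₃))) :
    ‖∫ u, ∫ v, ∫ w, f (u, v, w) ∂μ₃ ∂μ₂ ∂μ₁‖ₑ ≤ ∫⁻ t, ‖f t‖ₑ ∂(μ₁.prod (μ₂.prod μ₃)) := by
  rw [lintegral_prod₃ hf]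
  refine (enorm_integral_le_lintegral_enorm _).trans (lintegral_mono fun u => ?_)
  refine (enorm_integral_le_lintegral_enorm _).trans (lintegral_mono fun v => ?_)
  exact enorm_integral_le_lintegral_enorm _

lemma aemeasurable_prod₃_mul {f : α → ℝ≥0∞} {g : β → ℝ≥0∞} {h : γ → ℝ≥0∞}
    (hf : AEMeasurable f μ₁) (hg : AEMeasurable g μ₂) (hh : AEMeasurable h μ₃) :
    AEMeasurable (fun t : α × β × γ => f t.1 * g t.2.1 * h t.2.2) (μ₁.prod (μ₂.prod μ₃)) :=
  (hf.comp_fst.mul hg.comp_fst.comp_snd).mul hh.comp_snd.comp_snd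

lemma lintegral_prod₃_mul [SFinite μ₂] [SFinite μ₃] {f : α → ℝ≥0∞} {g : β → ℝ≥0∞}
    {h : γ → ℝ≥0∞}
    (hf : AEMeasurable f μ₁) (hg : AEMeasurable g μ₂) (hh : AEMeasurable h μ₃) :
    ∫⁻ t, f t.1 * g t.2.1 * h t.2.2 ∂(μ₁.prod (μ₂.prod μ₃)) =
      (∫⁻ u, f u ∂μ₁) * (∫⁻ v, g v ∂μ₂) * ∫⁻ w, h w ∂μ₃ := by
  simp_rw [mul_assoc]
  rw [lintegral_prod_mul (g := fun s : β × γ => g s.1 * h s.2) hf (hg.comp_fst.mul hh.comp_snd),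
    lintegral_prod_mul hg hh]

end TripleProduct

lemma lintegral_lintegral_kernel_mul {α β : Type*} [MeasurableSpace α] [MeasurableSpace β]
    {μ : Measure α} {ν : Measure β} [SFinite μ] [SFinite ν] {K : α → β → ℝ≥0∞} {a : β → ℝ≥0∞}
    {c : ℝ≥0∞} (hK : Measurable (Function.uncurry K)) (ha : AEMeasurable a ν)
    (hc : ∀ᵐ t ∂ν, ∫⁻ x, K x t ∂μ = c) :
    ∫⁻ x, ∫⁻ t, K x t * a t ∂ν ∂μ = c * ∫⁻ t, a t ∂ν := by
  rw [lintegral_lintegral_swap (hK.aemeasurable.mul ha.comp_snd), ← lintegral_const_mul'' c ha]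
  refine lintegral_congr_ae ?_
  filter_upwards [hc] with t ht
  rw [lintegral_mul_const _ hK.of_uncurry_right, ht]

lemma ENNReal.mul_mul_eq_rpow_mul_rpow {p : ℝ} (hp : 1 ≤ p) (k a r : ℝ≥0∞) :
    k * a * r = (k * a ^ p * r) ^ (1 / p) * (k * r) ^ (1 - 1 / p) := by
  have hp0 : 0 < p := by linarith
  have h₁ : (0 : ℝ) ≤ 1 / p := by positivity
  have h₂ : (0 : ℝ) ≤ 1 - 1 / p := by rw [sub_nonneg, div_le_one hp0]; exact hp
  have hsplit : ∀ b : ℝ≥0∞, b = b ^ (1 / p) * b ^ (1 - 1 / p) := fun b => by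
    rw [← ENNReal.rpow_add_of_nonneg _ _ h₁ h₂, add_sub_cancel, ENNReal.rpow_one]
  rw [ENNReal.mul_rpow_of_nonneg _ _ h₁, ENNReal.mul_rpow_of_nonneg _ _ h₁,
    ENNReal.mul_rpow_of_nonneg _ _ h₂, ← ENNReal.rpow_mul, mul_one_div_cancel hp0.ne',
    ENNReal.rpow_one]
  conv_lhs => rw [hsplit k, hsplit r]
  ring

lemma ENNReal.rpow_mul_rpow_one_sub_rpow_eq {p : ℝ} (hp : 1 ≤ p) {S C : ℝ≥0∞} (hS : S ≠ 0)
    (hS' : S ≠ ⊤) (hC : C ≠ 0) (hC' : C ≠ ⊤) (J : ℝ≥0∞) :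
    (S ^ (-1 : ℝ) * J ^ (1 / p) * (S * C) ^ (1 - 1 / p)) ^ p * C ^ (1 - p) = S ^ (-1 : ℝ) * J := by
  have hp0 : 0 < p := by linarith
  have h₂ : 0 ≤ 1 - 1 / p := by rw [sub_nonneg, div_le_one hp0]; exact hp
  calc _ = (S ^ (-p) * S ^ (p - 1)) * J * (C ^ (p - 1) * C ^ (1 - p)) := by
        rw [ENNReal.mul_rpow_of_nonneg _ _ hp0.le, ENNReal.mul_rpow_of_nonneg _ _ hp0.le,
          ENNReal.mul_rpow_of_nonneg _ _ h₂, ENNReal.mul_rpow_of_nonneg _ _ hp0.le,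
          ← ENNReal.rpow_mul, ← ENNReal.rpow_mul, ← ENNReal.rpow_mul, ← ENNReal.rpow_mul,
          one_div_mul_cancel hp0.ne', ENNReal.rpow_one,
          show (1 - 1 / p) * p = p - 1 by field_simp, neg_one_mul]
        ring
    _ = S ^ (-1 : ℝ) * J := by
      rw [← ENNReal.rpow_add _ _ hS hS', ← ENNReal.rpow_add _ _ hC hC']
      ring_nf
      simp

local notation "μ₊" => Measure.restrict (volume : Measure ℝ) (Ioi (0 : ℝ))

local notation "ν₊" => Measure.prod μ₊ (Measure.prod μ₊ μ₊)

namespace P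

noncomputable def integrand (f g h : ℝ → ℝ) (x : ℝ) (t : ℝ × ℝ × ℝ) : ℝ :=
  Phi x t.1 t.2.1 t.2.2 * f t.1 * g t.2.1 * h t.2.2

lemma integrand_nonneg {f g h : ℝ → ℝ} (hf : ∀ u > 0, 0 ≤ f u) (hg : ∀ v > 0, 0 ≤ g v)
    (hh : ∀ w > 0, 0 ≤ h w) (x : ℝ) {t : ℝ × ℝ × ℝ} (ht : t ∈ Ioi 0 ×ˢ Ioi 0 ×ˢ Ioi 0) :
    0 ≤ integrand f g h x t := by
  obtain ⟨hu, hv, hw⟩ := ht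
  have := Phi_nonneg (add_pos hv hw) x t.1
  have := hf _ hu
  have := hg _ hv
  have := hh _ hw
  unfold integrand
  positivity

lemma enorm_integrand (f g h : ℝ → ℝ) (x : ℝ) (t : ℝ × ℝ × ℝ) :
    ‖integrand f g h x t‖ₑ = ‖Phi x t.1 t.2.1 t.2.2‖ₑ * (‖f t.1‖ₑ * ‖g t.2.1‖ₑ * ‖h t.2.2‖ₑ) := by
  simp only [integrand, enorm_mul, mul_assoc]

lemma aemeasurable_enorm_integrand {f g h : ℝ → ℝ} (hf : AEMeasurable (fun u => ‖f u‖ₑ) μ₊)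
    (hg : AEMeasurable (fun v => ‖g v‖ₑ) μ₊) (hh : AEMeasurable (fun w => ‖h w‖ₑ) μ₊) (x : ℝ) :
    AEMeasurable (fun t => ‖integrand f g h x t‖ₑ) ν₊ := by
  simp_rw [enorm_integrand]
  exact (measurable_Phi.enorm.comp (measurable_const.prodMk measurable_id)).aemeasurable.mul
    (aemeasurable_prod₃_mul hf hg hh)

lemma enorm_integrand_mul_eq {p : ℝ} (hp : 1 ≤ p) (F₁ F₂ F₃ ρ₁ ρ₂ ρ₃ : ℝ → ℝ) (x : ℝ)
    (t : ℝ × ℝ × ℝ) :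
    ‖integrand (fun u => F₁ u * ρ₁ u) (fun v => F₂ v * ρ₂ v) (fun w => F₃ w * ρ₃ w) x t‖ₑ =
      ‖integrand (fun u => |F₁ u| ^ p * ρ₁ u) (fun v => |F₂ v| ^ p * ρ₂ v)
          (fun w => |F₃ w| ^ p * ρ₃ w) x t‖ₑ ^ (1 / p) *
        ‖integrand ρ₁ ρ₂ ρ₃ x t‖ₑ ^ (1 - 1 / p) := by
  have hp0 : (0 : ℝ) ≤ p := by linarith
  have key := ENNReal.mul_mul_eq_rpow_mul_rpow hp ‖Phi x t.1 t.2.1 t.2.2‖ₑ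
    (‖F₁ t.1‖ₑ * ‖F₂ t.2.1‖ₑ * ‖F₃ t.2.2‖ₑ) (‖ρ₁ t.1‖ₑ * ‖ρ₂ t.2.1‖ₑ * ‖ρ₃ t.2.2‖ₑ)
  simp only [ENNReal.mul_rpow_of_nonneg _ _ hp0] at key
  simp only [integrand, enorm_mul, Real.enorm_rpow_of_nonneg (abs_nonneg _) hp0, enorm_abs]
  refine (?_ : _ = _).trans (key.trans ?_)
  · ring
  · congr 2 <;> ring

end P

lemma volume_restrict_Ioi_prod₃ :
    (volume : Measure (ℝ × ℝ × ℝ)).restrict (Ioi 0 ×ˢ Ioi 0 ×ˢ Ioi 0) = ν₊ := by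
  rw [Measure.prod_restrict, Measure.prod_restrict, ← Measure.volume_eq_prod,
    ← Measure.volume_eq_prod]

lemma ae_mem_Ioi_prod₃ : ∀ᵐ t ∂ν₊, t ∈ Ioi (0 : ℝ) ×ˢ Ioi (0 : ℝ) ×ˢ Ioi (0 : ℝ) := by
  rw [← volume_restrict_Ioi_prod₃]
  exact ae_restrict_mem (measurableSet_Ioi.prod (measurableSet_Ioi.prod measurableSet_Ioi))

lemma P_nonneg {f g h : ℝ → ℝ} (hf : ∀ u > 0, 0 ≤ f u) (hg : ∀ v > 0, 0 ≤ g v)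
    (hh : ∀ w > 0, 0 ≤ h w) (x : ℝ) : 0 ≤ P f g h x :=
  mul_nonneg (by positivity) <| setIntegral_nonneg measurableSet_Ioi fun u hu =>
    setIntegral_nonneg measurableSet_Ioi fun v hv => setIntegral_nonneg measurableSet_Ioi
      fun w hw => P.integrand_nonneg hf hg hh x (t := (u, v, w)) ⟨hu, hv, hw⟩

lemma enorm_P_le {f g h : ℝ → ℝ} {x : ℝ}
    (hmeas : AEMeasurable (fun t => ‖P.integrand f g h x t‖ₑ) ν₊) :
    ‖P f g h x‖ₑ ≤ ‖1 / π‖ₑ * ∫⁻ t, ‖P.integrand f g h x t‖ₑ ∂ν₊ := by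
  rw [P, enorm_mul]
  gcongr
  exact enorm_integral₃_le hmeas

lemma P_eq_integral {f g h : ℝ → ℝ} {x : ℝ} (hint : Integrable (P.integrand f g h x) ν₊) :
    P f g h x = 1 / π * ∫ t, P.integrand f g h x t ∂ν₊ := by
  rw [integral_prod₃ hint]
  rfl

lemma lintegral_enorm_integrand {f g h : ℝ → ℝ} (hf : ∀ u > 0, 0 ≤ f u) (hg : ∀ v > 0, 0 ≤ g v)
    (hh : ∀ w > 0, 0 ≤ h w) {x : ℝ}
    (hint : IntegrableOn (P.integrand f g h x) (Ioi 0 ×ˢ Ioi 0 ×ˢ Ioi 0)) :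
    ∫⁻ t, ‖P.integrand f g h x t‖ₑ ∂ν₊ = ENNReal.ofReal (π * P f g h x) := by
  rw [IntegrableOn, volume_restrict_Ioi_prod₃] at hint
  have hnonneg : 0 ≤ᵐ[ν₊] P.integrand f g h x := by
    filter_upwards [ae_mem_Ioi_prod₃] with t ht
    exact P.integrand_nonneg hf hg hh x ht
  rw [P_eq_integral hint, ← mul_assoc, mul_one_div_cancel pi_ne_zero, one_mul,
    lintegral_enorm_eq_ofReal_integral hint hnonneg]

lemma lintegral_Ioi_lintegral_enorm_integrand {f g h : ℝ → ℝ}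
    (hf : AEMeasurable (fun u => ‖f u‖ₑ) μ₊) (hg : AEMeasurable (fun v => ‖g v‖ₑ) μ₊)
    (hh : AEMeasurable (fun w => ‖h w‖ₑ) μ₊) :
    ∫⁻ x in Ioi 0, ∫⁻ t, ‖P.integrand f g h x t‖ₑ ∂ν₊ =
      ENNReal.ofReal π * ((∫⁻ u, ‖f u‖ₑ ∂μ₊) * (∫⁻ v, ‖g v‖ₑ ∂μ₊) * ∫⁻ w, ‖h w‖ₑ ∂μ₊) := by
  simp_rw [P.enorm_integrand]
  rw [lintegral_lintegral_kernel_mul (K := fun x t => ‖Phi x t.1 t.2.1 t.2.2‖ₑ)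
    measurable_Phi.enorm (aemeasurable_prod₃_mul hf hg hh), lintegral_prod₃_mul hf hg hh]
  filter_upwards [ae_mem_Ioi_prod₃] with t ⟨_, hv, hw⟩
  exact lintegral_Ioi_enorm_Phi (add_pos hv hw)

lemma enorm_P_le_rpow_mul_rpow {p x : ℝ} (hp : 1 ≤ p) {F₁ F₂ F₃ ρ₁ ρ₂ ρ₃ : ℝ → ℝ}
    (hA : AEMeasurable (fun t => ‖P.integrand (fun u => |F₁ u| ^ p * ρ₁ u)
      (fun v => |F₂ v| ^ p * ρ₂ v) (fun w => |F₃ w| ^ p * ρ₃ w) x t‖ₑ) ν₊)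
    (hW : AEMeasurable (fun t => ‖P.integrand ρ₁ ρ₂ ρ₃ x t‖ₑ) ν₊) :
    ‖P (fun u => F₁ u * ρ₁ u) (fun v => F₂ v * ρ₂ v) (fun w => F₃ w * ρ₃ w) x‖ₑ ≤
      ‖1 / π‖ₑ * (∫⁻ t, ‖P.integrand (fun u => |F₁ u| ^ p * ρ₁ u)
          (fun v => |F₂ v| ^ p * ρ₂ v) (fun w => |F₃ w| ^ p * ρ₃ w) x t‖ₑ ∂ν₊) ^ (1 / p) *
        (∫⁻ t, ‖P.integrand ρ₁ ρ₂ ρ₃ x t‖ₑ ∂ν₊) ^ (1 - 1 / p) := by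
  have hsplit := funext (P.enorm_integrand_mul_eq hp F₁ F₂ F₃ ρ₁ ρ₂ ρ₃ x)
  have hmeas : AEMeasurable (fun t => ‖P.integrand (fun u => F₁ u * ρ₁ u)
      (fun v => F₂ v * ρ₂ v) (fun w => F₃ w * ρ₃ w) x t‖ₑ) ν₊ := by
    rw [hsplit]
    exact (hA.pow_const _).mul (hW.pow_const _)
  refine (enorm_P_le hmeas).trans ?_
  rw [mul_assoc, hsplit]
  gcongr
  exact ENNReal.lintegral_mul_norm_pow_le hA hW (by positivity)
    (by rw [sub_nonneg, div_le_one (by linarith)]; exact hp) (add_sub_cancel _ _)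

lemma enorm_rpow_abs_mul_rpow_le {p y c s : ℝ} {J : ℝ≥0∞} (hp : 1 < p) (hs : 0 < s) (hc : 0 ≤ c)
    (h : ‖y‖ₑ ≤ ‖1 / s‖ₑ * J ^ (1 / p) * ENNReal.ofReal (s * c) ^ (1 - 1 / p)) :
    ‖|y * c ^ (1 / p - 1)| ^ p‖ₑ ≤ ‖1 / s‖ₑ * J := by
  have hp0 : 0 < p := by linarith
  rcases hc.eq_or_lt with rfl | hc
  · have hexp : 1 / p - 1 ≠ 0 := by
      rw [sub_ne_zero, one_div, ne_eq, inv_eq_one]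
      exact hp.ne'
    -- real powers of `0` vanish also for negative exponents
    rw [zero_rpow hexp, mul_zero, abs_zero, zero_rpow hp0.ne', enorm_zero]
    exact zero_le
  set S := ENNReal.ofReal s
  set C := ENNReal.ofReal c
  have hS : S ≠ 0 := ENNReal.ofReal_ne_zero_iff.mpr hs
  have hC : C ≠ 0 := ENNReal.ofReal_ne_zero_iff.mpr hc
  have hinv : ‖1 / s‖ₑ = S ^ (-1 : ℝ) := by
    rw [ENNReal.rpow_neg_one, one_div, enorm_inv hs.ne', Real.enorm_of_nonneg hs.le]
  have hlhs : ‖|y * c ^ (1 / p - 1)| ^ p‖ₑ = ‖y‖ₑ ^ p * C ^ (1 - p) := by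
    rw [Real.enorm_rpow_of_nonneg (abs_nonneg _) hp0.le, enorm_abs, enorm_mul,
      ENNReal.mul_rpow_of_nonneg _ _ hp0.le, Real.enorm_of_nonneg (rpow_nonneg hc.le _),
      ← ENNReal.ofReal_rpow_of_pos hc, ← ENNReal.rpow_mul]
    congr 2
    field_simp
  rw [hlhs, hinv]
  rw [hinv, ENNReal.ofReal_mul hs.le] at h
  calc ‖y‖ₑ ^ p * C ^ (1 - p)
      ≤ (S ^ (-1 : ℝ) * J ^ (1 / p) * (S * C) ^ (1 - 1 / p)) ^ p * C ^ (1 - p) := by gcongr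
    _ = S ^ (-1 : ℝ) * J :=
      ENNReal.rpow_mul_rpow_one_sub_rpow_eq hp.le hS ENNReal.ofReal_ne_top hC
        ENNReal.ofReal_ne_top J

lemma lintegral_Ioi_enorm_P_mul_rpow_le {ρ₁ ρ₂ ρ₃ : ℝ → ℝ}
    (hρ₁ : ∀ x > (0 : ℝ), 0 ≤ ρ₁ x) (hρ₂ : ∀ x > (0 : ℝ), 0 ≤ ρ₂ x)
    (hρ₃ : ∀ x > (0 : ℝ), 0 ≤ ρ₃ x)
    (hwell : ∀ x > (0 : ℝ), IntegrableOn (P.integrand ρ₁ ρ₂ ρ₃ x) (Ioi 0 ×ˢ Ioi 0 ×ˢ Ioi 0))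
    {p : ℝ} (hp : 1 < p) {F₁ F₂ F₃ : ℝ → ℝ}
    (hF₁ : AEMeasurable (fun x => ‖|F₁ x| ^ p * ρ₁ x‖ₑ) μ₊)
    (hF₂ : AEMeasurable (fun x => ‖|F₂ x| ^ p * ρ₂ x‖ₑ) μ₊)
    (hF₃ : AEMeasurable (fun x => ‖|F₃ x| ^ p * ρ₃ x‖ₑ) μ₊) :
    ∫⁻ x in Ioi 0,
        ‖|P (fun u => F₁ u * ρ₁ u) (fun v => F₂ v * ρ₂ v) (fun w => F₃ w * ρ₃ w) x *
          P ρ₁ ρ₂ ρ₃ x ^ (1 / p - 1)| ^ p‖ₑ ≤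
      (∫⁻ x, ‖|F₁ x| ^ p * ρ₁ x‖ₑ ∂μ₊) * (∫⁻ x, ‖|F₂ x| ^ p * ρ₂ x‖ₑ ∂μ₊) *
        ∫⁻ x, ‖|F₃ x| ^ p * ρ₃ x‖ₑ ∂μ₊ := by
  have hpointwise : ∀ x > (0 : ℝ),
      ‖|P (fun u => F₁ u * ρ₁ u) (fun v => F₂ v * ρ₂ v) (fun w => F₃ w * ρ₃ w) x *
          P ρ₁ ρ₂ ρ₃ x ^ (1 / p - 1)| ^ p‖ₑ ≤
        ‖1 / π‖ₑ * ∫⁻ t, ‖P.integrand (fun u => |F₁ u| ^ p * ρ₁ u)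
          (fun v => |F₂ v| ^ p * ρ₂ v) (fun w => |F₃ w| ^ p * ρ₃ w) x t‖ₑ ∂ν₊ := fun x hx => by
    have hW := hwell x hx
    refine enorm_rpow_abs_mul_rpow_le hp pi_pos (P_nonneg hρ₁ hρ₂ hρ₃ x) ?_
    rw [← lintegral_enorm_integrand hρ₁ hρ₂ hρ₃ hW]
    rw [IntegrableOn, volume_restrict_Ioi_prod₃] at hW
    exact enorm_P_le_rpow_mul_rpow hp.le (P.aemeasurable_enorm_integrand hF₁ hF₂ hF₃ x)
      hW.aestronglyMeasurable.enorm
  calc _ ≤ ∫⁻ x in Ioi 0, ‖1 / π‖ₑ * ∫⁻ t, ‖P.integrand (fun u => |F₁ u| ^ p * ρ₁ u)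
          (fun v => |F₂ v| ^ p * ρ₂ v) (fun w => |F₃ w| ^ p * ρ₃ w) x t‖ₑ ∂ν₊ :=
        setLIntegral_mono' measurableSet_Ioi hpointwise
    _ = _ := by
      rw [lintegral_const_mul' _ _ enorm_ne_top,
        lintegral_Ioi_lintegral_enorm_integrand hF₁ hF₂ hF₃,
        ← mul_assoc, one_div, enorm_inv pi_ne_zero, Real.enorm_of_nonneg pi_pos.le,
        ENNReal.inv_mul_cancel (by simp [pi_pos]) ENNReal.ofReal_ne_top, one_mul]

theorem stmt_16 (ρ₁ ρ₂ ρ₃ : ℝ → ℝ)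
    (hρ₁ : ∀ x > (0 : ℝ), 0 < ρ₁ x) (hρ₂ : ∀ x > (0 : ℝ), 0 < ρ₂ x)
    (hρ₃ : ∀ x > (0 : ℝ), 0 < ρ₃ x)
    (hwell : ∀ x > (0 : ℝ), IntegrableOn
      (fun t : ℝ × ℝ × ℝ => Phi x t.1 t.2.1 t.2.2 * ρ₁ t.1 * ρ₂ t.2.1 * ρ₃ t.2.2)
      (Ioi 0 ×ˢ Ioi 0 ×ˢ Ioi 0))
    (p : ℝ) (hp : 1 < p) (F₁ F₂ F₃ : ℝ → ℝ)
    (hF₁ : IntegrableOn (fun x => |F₁ x| ^ p * ρ₁ x) (Ioi 0))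
    (hF₂ : IntegrableOn (fun x => |F₂ x| ^ p * ρ₂ x) (Ioi 0))
    (hF₃ : IntegrableOn (fun x => |F₃ x| ^ p * ρ₃ x) (Ioi 0)) :
    (∫ x in Ioi (0 : ℝ),
        |P (fun u => F₁ u * ρ₁ u) (fun v => F₂ v * ρ₂ v) (fun w => F₃ w * ρ₃ w) x *
          P ρ₁ ρ₂ ρ₃ x ^ (1 / p - 1)| ^ p) ^ (1 / p) ≤
      (∫ x in Ioi (0 : ℝ), |F₁ x| ^ p * ρ₁ x) ^ (1 / p) *
        (∫ x in Ioi (0 : ℝ), |F₂ x| ^ p * ρ₂ x) ^ (1 / p) *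
        (∫ x in Ioi (0 : ℝ), |F₃ x| ^ p * ρ₃ x) ^ (1 / p) := by
  have hweight : ∀ {F ρ : ℝ → ℝ}, (∀ x > (0 : ℝ), 0 < ρ x) →
      0 ≤ᵐ[μ₊] fun x => |F x| ^ p * ρ x := fun hρ =>
    ae_restrict_of_forall_mem measurableSet_Ioi fun x hx => by have := hρ x hx; positivity
  have hR₁ := integral_nonneg_of_ae (hweight (F := F₁) hρ₁)
  have hR₂ := integral_nonneg_of_ae (hweight (F := F₂) hρ₂)
  have hR₃ := integral_nonneg_of_ae (hweight (F := F₃) hρ₃)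
  have hlintegral := lintegral_Ioi_enorm_P_mul_rpow_le (fun x hx => (hρ₁ x hx).le)
    (fun x hx => (hρ₂ x hx).le) (fun x hx => (hρ₃ x hx).le) hwell hp
    hF₁.aestronglyMeasurable.enorm hF₂.aestronglyMeasurable.enorm hF₃.aestronglyMeasurable.enorm
  rw [lintegral_enorm_eq_ofReal_integral hF₁ (hweight hρ₁),
    lintegral_enorm_eq_ofReal_integral hF₂ (hweight hρ₂),
    lintegral_enorm_eq_ofReal_integral hF₃ (hweight hρ₃), ← ENNReal.ofReal_mul hR₁,
    ← ENNReal.ofReal_mul (mul_nonneg hR₁ hR₂)] at hlintegral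
  simp_rw [← ofReal_norm] at hlintegral
  have hintegral := (Real.le_norm_self _).trans <| (norm_integral_le_lintegral_norm _).trans <|
    ENNReal.toReal_le_of_le_ofReal (by positivity) hlintegral
  rw [← mul_rpow hR₁ hR₂, ← mul_rpow (mul_nonneg hR₁ hR₂) hR₃]
  exact rpow_le_rpow (integral_nonneg fun x => by positivity) hintegral (by positivity)
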